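/- arXiv:2002.09582 — 2 statements merged into one kernel-verified Lean document; each statement's English description precedes it below -/
import Mathlib

section
/- Let Δ ∈ 𝔽_q[T] be nonzero and imaginary. Let K := F[X]/(X² − Δ) with θ the image of X, and let O := A[θ] ⊆ K. If a, b, c ∈ A satisfy gcd(a, b, c) = 1 and b² − 4ac = Δ (note that then a ≠ 0), then the A-submodule M := A·1 + A·((−b + θ)/(2a)) of K is a fractional O-ideal and is invertible: there exists a fractional O-ideal N with M·N = O. -/
open Polynomial Pointwise

/-- `ordO Fq Δ` is the order `O = A[θ] = 𝔽_q[T][X]/(X² − Δ)`, where `θ` is a square root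
of `Δ`. -/
abbrev ordO (Fq : Type) [Field Fq] (Δ : Polynomial Fq) : Type :=
  AdjoinRoot ((Polynomial.X : Polynomial (Polynomial Fq)) ^ 2 - Polynomial.C Δ)

/-- `fieldK Fq Δ` is the fraction field `K = F(θ) = F[X]/(X² − Δ)` of the order `ordO Fq Δ`. -/
abbrev fieldK (Fq : Type) [Field Fq] (Δ : Polynomial Fq) : Type :=
  FractionRing (ordO Fq Δ)

/-- The canonical ring homomorphism `A = 𝔽_q[T] → K`. -/
noncomputable def mapA (Fq : Type) [Field Fq] (Δ : Polynomial Fq) :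
    Polynomial Fq →+* fieldK Fq Δ :=
  (algebraMap (ordO Fq Δ) (fieldK Fq Δ)).comp (AdjoinRoot.of _)

/-- The image `θ ∈ K` of the root `X` of `X² − Δ`. -/
noncomputable def thetaK (Fq : Type) [Field Fq] (Δ : Polynomial Fq) : fieldK Fq Δ :=
  algebraMap (ordO Fq Δ) (fieldK Fq Δ) (AdjoinRoot.root _)

/-- The element `ω = (−b + θ)/(2a) ∈ K` attached to a quadratic form `(a, b, c)`. -/
noncomputable def omegaK (Fq : Type) [Field Fq] (Δ : Polynomial Fq)
    [IsDomain (ordO Fq Δ)] (a b : Polynomial Fq) : fieldK Fq Δ :=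
  (mapA Fq Δ (-b) + thetaK Fq Δ) / mapA Fq Δ (2 * a)

/-- The subset `M = A·1 + A·ω` of `K`, where `ω = (−b + θ)/(2a)`. -/
noncomputable def idealSet (Fq : Type) [Field Fq] (Δ : Polynomial Fq)
    [IsDomain (ordO Fq Δ)] (a b : Polynomial Fq) : Set (fieldK Fq Δ) :=
  {x | ∃ u v : Polynomial Fq, x = mapA Fq Δ u + mapA Fq Δ v * omegaK Fq Δ a b}

section aux
variable (Fq : Type) [Field Fq] (Δ : Polynomial Fq)

lemma theta_sq : thetaK Fq Δ ^ 2 = mapA Fq Δ Δ := by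
  unfold thetaK mapA
  rw [RingHom.comp_apply, ← map_pow]
  refine congrArg _ ?_
  have h := AdjoinRoot.mk_self (f := (X : Polynomial (Polynomial Fq)) ^ 2 - C Δ)
  rw [map_sub, map_pow] at h
  have h2 : (AdjoinRoot.root ((X : Polynomial (Polynomial Fq)) ^ 2 - C Δ)) ^ 2
      - AdjoinRoot.of _ Δ = 0 := by
    simpa [AdjoinRoot.mk_X, AdjoinRoot.mk_C] using h
  linear_combination h2

lemma mapA_ne_zero [IsDomain (ordO Fq Δ)] {z : Polynomial Fq} (hz : z ≠ 0) :
    mapA Fq Δ z ≠ 0 := by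
  unfold mapA
  simp only [RingHom.comp_apply]
  intro h
  have h0 : AdjoinRoot.of ((X : Polynomial (Polynomial Fq)) ^ 2 - C Δ) z = 0 :=
    IsFractionRing.injective (ordO Fq Δ) (fieldK Fq Δ) (by simpa using h)
  have hd : ((X : Polynomial (Polynomial Fq)) ^ 2 - C Δ) ∣ C z := by
    rwa [AdjoinRoot.of, RingHom.comp_apply, AdjoinRoot.mk_eq_zero] at h0
  have hdeg : natDegree ((X : Polynomial (Polynomial Fq)) ^ 2 - C Δ) = 2 := by
    simpa using natDegree_X_pow_sub_C (n := 2) (a := Δ)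
  have : (C z : Polynomial (Polynomial Fq)) = 0 :=
    Polynomial.eq_zero_of_dvd_of_natDegree_lt hd (by simp [hdeg])
  exact hz (by simpa using this)

end aux

section aux2
variable (Fq : Type) [Field Fq] (Δ : Polynomial Fq)

lemma algebraMap_of_eq (u : Polynomial Fq) :
    algebraMap (ordO Fq Δ) (fieldK Fq Δ) (AdjoinRoot.of _ u) = mapA Fq Δ u := rfl

lemma repr_O (r : ordO Fq Δ) : ∃ s t : Polynomial Fq,
    algebraMap (ordO Fq Δ) (fieldK Fq Δ) r = mapA Fq Δ s + mapA Fq Δ t * thetaK Fq Δ := by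
  induction r using AdjoinRoot.induction_on with
  | ih p =>
    induction p using Polynomial.induction_on with
    | C q =>
      refine ⟨q, 0, ?_⟩
      rw [map_zero, zero_mul, add_zero]
      rfl
    | add p q hp hq =>
      obtain ⟨s1, t1, h1⟩ := hp
      obtain ⟨s2, t2, h2⟩ := hq
      exact ⟨s1 + s2, t1 + t2, by rw [map_add, map_add, h1, h2, map_add, map_add]; ring⟩
    | monomial n q hq =>
      obtain ⟨s, t, h⟩ := hq
      refine ⟨t * Δ, s, ?_⟩
      have hx : AdjoinRoot.mk ((X : Polynomial (Polynomial Fq)) ^ 2 - C Δ)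
          (C q * X ^ (n + 1)) = AdjoinRoot.mk _ (C q * X ^ n) * AdjoinRoot.root _ := by
        rw [← AdjoinRoot.mk_X, ← map_mul]; ring_nf
      have hroot : algebraMap (ordO Fq Δ) (fieldK Fq Δ) (AdjoinRoot.root _) = thetaK Fq Δ :=
        rfl
      rw [hx, map_mul, h, map_mul, hroot]
      linear_combination (mapA Fq Δ t) * theta_sq Fq Δ

end aux2

set_option maxHeartbeats 2000000 in
/-- Let `Δ ∈ 𝔽_q[T]` be nonzero and imaginary, `K := F[X]/(X² − Δ)` with `θ` the image of
`X`, and `O := A[θ] ⊆ K`.  If `a, b, c ∈ A` satisfy `gcd(a, b, c) = 1` and `b² − 4ac = Δ`,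
then the `A`-submodule `M := A·1 + A·((−b + θ)/(2a))` of `K` is a fractional `O`-ideal and
is invertible: there exists a fractional `O`-ideal `N` with `M·N = O`. -/
theorem stmt_6 (Fq : Type) [Field Fq] [Fintype Fq]
    (hq : Odd (Fintype.card Fq))
    (Δ : Polynomial Fq) (hΔ0 : Δ ≠ 0)
    (him : Odd Δ.natDegree ∨ (Even Δ.natDegree ∧ ¬ ∃ x : Fq, x ^ 2 = Δ.leadingCoeff))
    [IsDomain (ordO Fq Δ)]
    (a b c : Polynomial Fq)
    (hgcd : ∀ d : Polynomial Fq, d ∣ a → d ∣ b → d ∣ c → IsUnit d)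
    (hdisc : b ^ 2 - 4 * a * c = Δ) :
    ∃ M : FractionalIdeal (nonZeroDivisors (ordO Fq Δ)) (fieldK Fq Δ),
      ((M : Submodule (ordO Fq Δ) (fieldK Fq Δ)) : Set (fieldK Fq Δ)) = idealSet Fq Δ a b ∧
      ∃ N : FractionalIdeal (nonZeroDivisors (ordO Fq Δ)) (fieldK Fq Δ), M * N = 1 := by
  classical
  -- 2 ≠ 0 in Fq
  have h2 : (2 : Fq) ≠ 0 := by
    intro h
    haveI : CharP Fq (ringChar Fq) := ringChar.charP Fq
    have hp : (ringChar Fq).Prime := CharP.char_is_prime Fq (ringChar Fq)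
    have hdvd : ringChar Fq ∣ 2 := by
      have : ((2 : ℕ) : Fq) = 0 := by exact_mod_cast h
      exact (ringChar.spec Fq 2).mp this
    have hp2 : ringChar Fq = 2 := (Nat.prime_dvd_prime_iff_eq hp Nat.prime_two).mp hdvd
    obtain ⟨n, -, hcard⟩ := FiniteField.card Fq (ringChar Fq)
    rw [hp2] at hcard
    have hev : Even (Fintype.card Fq) := by
      rw [hcard]
      exact (Nat.even_pow.mpr ⟨even_two, by exact_mod_cast n.ne_zero⟩)
    exact (Nat.not_even_iff_odd.mpr hq) hev
  -- a ≠ 0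
  have ha0 : a ≠ 0 := by
    rintro rfl
    rw [mul_zero, zero_mul, sub_zero] at hdisc
    have hb0 : b ≠ 0 := by rintro rfl; simp at hdisc; exact hΔ0 hdisc.symm
    rcases him with hodd | ⟨-, hsq⟩
    · rw [← hdisc, natDegree_pow] at hodd
      exact (Nat.not_odd_iff_even.mpr ⟨b.natDegree, two_mul _⟩) hodd
    · exact hsq ⟨b.leadingCoeff, by rw [← hdisc, leadingCoeff_pow]⟩
  have hC2 : (C (2 : Fq) : Polynomial Fq) = 2 := map_ofNat C 2
  have h2P : (2 : Polynomial Fq) ≠ 0 := by rw [← hC2]; exact C_ne_zero.mpr h2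
  have hA : mapA Fq Δ a ≠ 0 := mapA_ne_zero Fq Δ ha0
  have h2K : (2 : fieldK Fq Δ) ≠ 0 := by
    rw [← map_ofNat (mapA Fq Δ) 2]; exact mapA_ne_zero Fq Δ h2P
  have hden2 : 2 * mapA Fq Δ a ≠ 0 := mul_ne_zero h2K hA
  -- the half element e
  set e : Polynomial Fq := C ((2 : Fq)⁻¹) with he_def
  have heP : (2 : Polynomial Fq) * e = 1 := by
    rw [← hC2, ← C_mul, mul_inv_cancel₀ h2, map_one]
  have hE : (2 : fieldK Fq Δ) * mapA Fq Δ e = 1 := by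
    rw [← map_ofNat (mapA Fq Δ) 2, ← map_mul, heP, map_one]
  -- ω as an explicit quotient
  have hωdef : omegaK Fq Δ a b
      = (-(mapA Fq Δ b) + thetaK Fq Δ) / (2 * mapA Fq Δ a) := by
    rw [omegaK, map_neg, map_mul, map_ofNat]
  -- key quadratic relation
  have hΔmap : mapA Fq Δ Δ = mapA Fq Δ (b ^ 2 - 4 * a * c) :=
    congrArg (mapA Fq Δ) hdisc.symm
  have key : thetaK Fq Δ ^ 2
      = mapA Fq Δ b * mapA Fq Δ b - 4 * (mapA Fq Δ a * mapA Fq Δ c) := by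
    rw [theta_sq Fq Δ, hΔmap]
    simp only [map_sub, map_mul, map_pow, map_ofNat]
    ring
  have homega : 2 * mapA Fq Δ a * omegaK Fq Δ a b
      = -(mapA Fq Δ b) + thetaK Fq Δ := by
    rw [hωdef, ← mul_div_assoc, mul_div_cancel_left₀ _ hden2]
  -- θ = b + 2aω
  have hθ : thetaK Fq Δ = mapA Fq Δ b + 2 * mapA Fq Δ a * omegaK Fq Δ a b := by
    linear_combination -homega
  -- θω = -2c - bω
  have hθω : thetaK Fq Δ * omegaK Fq Δ a b
      = -(2 * mapA Fq Δ c) - mapA Fq Δ b * omegaK Fq Δ a b := by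
    apply mul_left_cancel₀ hden2
    linear_combination (thetaK Fq Δ + mapA Fq Δ b) * homega + key
  -- the conjugate generator z, integral over O
  set zO : ordO Fq Δ :=
    AdjoinRoot.of _ (-(e * b)) - AdjoinRoot.of _ e * AdjoinRoot.root _ with hzO_def
  set z : fieldK Fq Δ := algebraMap (ordO Fq Δ) (fieldK Fq Δ) zO with hz_def
  have hzval : z = -(mapA Fq Δ e * mapA Fq Δ b) - mapA Fq Δ e * thetaK Fq Δ := by
    rw [hz_def, hzO_def, map_sub, map_mul, algebraMap_of_eq, algebraMap_of_eq, map_neg,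
      map_mul]
    rfl
  -- identities
  have hAω : mapA Fq Δ (-(e * b)) + mapA Fq Δ e * thetaK Fq Δ
      = omegaK Fq Δ a b * mapA Fq Δ a := by
    rw [map_neg, map_mul]
    apply mul_left_cancel₀ h2K
    linear_combination (thetaK Fq Δ - mapA Fq Δ b) * hE - homega
  have hWz : omegaK Fq Δ a b * z = mapA Fq Δ c := by
    rw [hzval]
    apply mul_left_cancel₀ hden2
    linear_combination (-(mapA Fq Δ e) * (mapA Fq Δ b + thetaK Fq Δ)) * homega
      + (-(mapA Fq Δ e)) * key + (2 * mapA Fq Δ a * mapA Fq Δ c) * hE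
  have hB : mapA Fq Δ b = -(omegaK Fq Δ a b * mapA Fq Δ a) - z := by
    rw [hzval]
    apply mul_left_cancel₀ h2K
    linear_combination homega - (mapA Fq Δ b + thetaK Fq Δ) * hE
  -- Bezout coefficients
  have hbez : ∃ u v w : Polynomial Fq, u * a + v * b + w * c = 1 := by
    set g1 := EuclideanDomain.gcd b c with hg1
    set g := EuclideanDomain.gcd a g1 with hg
    have hgb : g1 ∣ b := EuclideanDomain.gcd_dvd_left _ _
    have hgc : g1 ∣ c := EuclideanDomain.gcd_dvd_right _ _
    have hga : g ∣ a := EuclideanDomain.gcd_dvd_left _ _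
    have hgg1 : g ∣ g1 := EuclideanDomain.gcd_dvd_right _ _
    obtain ⟨gi, hgi⟩ := (hgcd g hga (hgg1.trans hgb) (hgg1.trans hgc)).exists_left_inv
    have h1 := EuclideanDomain.gcd_eq_gcd_ab a g1
    have h2' := EuclideanDomain.gcd_eq_gcd_ab b c
    refine ⟨gi * EuclideanDomain.gcdA a g1,
        gi * EuclideanDomain.gcdB a g1 * EuclideanDomain.gcdA b c,
        gi * EuclideanDomain.gcdB a g1 * EuclideanDomain.gcdB b c, ?_⟩
    rw [← hg] at h1
    rw [← hg1] at h2'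
    linear_combination (-gi) * h1 + (-(gi * EuclideanDomain.gcdB a g1)) * h2' + hgi
  obtain ⟨u, v, w, hbezout⟩ := hbez
  -- the fractional ideals
  set S := nonZeroDivisors (ordO Fq Δ)
  set M : FractionalIdeal S (fieldK Fq Δ) :=
    FractionalIdeal.spanSingleton S 1 + FractionalIdeal.spanSingleton S (omegaK Fq Δ a b)
    with hM_def
  set N : FractionalIdeal S (fieldK Fq Δ) :=
    FractionalIdeal.spanSingleton S (mapA Fq Δ a) + FractionalIdeal.spanSingleton S z
    with hN_def
  have hMsub : (M : Submodule (ordO Fq Δ) (fieldK Fq Δ))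
      = Submodule.span (ordO Fq Δ) {1, omegaK Fq Δ a b} := by
    rw [hM_def, FractionalIdeal.coe_add, FractionalIdeal.coe_spanSingleton,
      FractionalIdeal.coe_spanSingleton, Submodule.add_eq_sup, ← Submodule.span_union,
      Set.singleton_union]
  have hNsub : (N : Submodule (ordO Fq Δ) (fieldK Fq Δ))
      = Submodule.span (ordO Fq Δ) {mapA Fq Δ a, z} := by
    rw [hN_def, FractionalIdeal.coe_add, FractionalIdeal.coe_spanSingleton,
      FractionalIdeal.coe_spanSingleton, Submodule.add_eq_sup, ← Submodule.span_union,
      Set.singleton_union]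
  refine ⟨M, ?_, N, ?_⟩
  · -- set equality
    rw [hMsub]
    ext x
    simp only [SetLike.mem_coe]
    constructor
    · intro hx
      induction hx using Submodule.span_induction with
      | mem y hy =>
        rcases hy with rfl | rfl
        · exact ⟨1, 0, by simp⟩
        · exact ⟨0, 1, by simp⟩
      | zero => exact ⟨0, 0, by simp⟩
      | add x y _ _ hx' hy' =>
        obtain ⟨u1, v1, rfl⟩ := hx'
        obtain ⟨u2, v2, rfl⟩ := hy'
        exact ⟨u1 + u2, v1 + v2, by rw [map_add, map_add]; ring⟩
      | smul r x _ hx' =>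
        obtain ⟨u1, v1, rfl⟩ := hx'
        obtain ⟨s, t, hr⟩ := repr_O Fq Δ r
        refine ⟨s * u1 + t * u1 * b - 2 * (t * (v1 * c)),
          s * v1 + 2 * (a * (t * u1)) - b * (t * v1), ?_⟩
        rw [Algebra.smul_def, hr]
        simp only [map_add, map_sub, map_mul, map_ofNat]
        linear_combination (mapA Fq Δ t * mapA Fq Δ u1) * hθ
          + (mapA Fq Δ t * mapA Fq Δ v1) * hθω
    · rintro ⟨u1, v1, rfl⟩
      have e1 : mapA Fq Δ u1 = (AdjoinRoot.of _ u1 : ordO Fq Δ) • (1 : fieldK Fq Δ) := by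
        rw [Algebra.smul_def, mul_one]; rfl
      have e2 : mapA Fq Δ v1 * omegaK Fq Δ a b
          = (AdjoinRoot.of _ v1 : ordO Fq Δ) • omegaK Fq Δ a b := by
        rw [Algebra.smul_def]; rfl
      rw [e1, e2]
      exact Submodule.add_mem _
        (Submodule.smul_mem _ _ (Submodule.subset_span (by simp)))
        (Submodule.smul_mem _ _ (Submodule.subset_span (by simp)))
  · -- invertibility
    rw [← FractionalIdeal.coeToSubmodule_inj, FractionalIdeal.coe_mul, FractionalIdeal.coe_one, hMsub, hNsub,
      Submodule.span_mul_span]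
    apply le_antisymm
    · rw [Submodule.span_le]
      rintro x hx
      rw [Set.mem_mul] at hx
      obtain ⟨p, hp, q, hq, rfl⟩ := hx
      simp only [Set.mem_insert_iff, Set.mem_singleton_iff] at hp hq
      rw [SetLike.mem_coe, Submodule.mem_one]
      rcases hp with rfl | rfl <;> rcases hq with rfl | rfl
      · exact ⟨AdjoinRoot.of _ a, by rw [one_mul]; rfl⟩
      · exact ⟨zO, by rw [one_mul]⟩
      · refine ⟨AdjoinRoot.of _ (-(e * b)) + AdjoinRoot.of _ e * AdjoinRoot.root _, ?_⟩
        rw [map_add, map_mul, algebraMap_of_eq]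
        exact hAω
      · exact ⟨AdjoinRoot.of _ c, hWz.symm⟩
    · rw [Submodule.one_le]
      have hma : mapA Fq Δ a
          ∈ Submodule.span (ordO Fq Δ)
            (({1, omegaK Fq Δ a b} : Set (fieldK Fq Δ)) * ({mapA Fq Δ a, z} : Set (fieldK Fq Δ))) := by
        apply Submodule.subset_span
        rw [show mapA Fq Δ a = 1 * mapA Fq Δ a from (one_mul _).symm]
        exact Set.mul_mem_mul (by simp) (by simp)
      have hmz : z ∈ Submodule.span (ordO Fq Δ)
          (({1, omegaK Fq Δ a b} : Set (fieldK Fq Δ)) * ({mapA Fq Δ a, z} : Set (fieldK Fq Δ))) := by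
        apply Submodule.subset_span
        rw [show z = 1 * z from (one_mul _).symm]
        exact Set.mul_mem_mul (by simp) (by simp)
      have hmωa : omegaK Fq Δ a b * mapA Fq Δ a ∈ Submodule.span (ordO Fq Δ)
          (({1, omegaK Fq Δ a b} : Set (fieldK Fq Δ)) * ({mapA Fq Δ a, z} : Set (fieldK Fq Δ))) :=
        Submodule.subset_span <| Set.mul_mem_mul (by simp) (by simp)
      have hmc : mapA Fq Δ c ∈ Submodule.span (ordO Fq Δ)
          (({1, omegaK Fq Δ a b} : Set (fieldK Fq Δ)) * ({mapA Fq Δ a, z} : Set (fieldK Fq Δ))) := by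
        rw [← hWz]
        exact Submodule.subset_span <| Set.mul_mem_mul (by simp) (by simp)
      have hmb : mapA Fq Δ b ∈ Submodule.span (ordO Fq Δ)
          (({1, omegaK Fq Δ a b} : Set (fieldK Fq Δ)) * ({mapA Fq Δ a, z} : Set (fieldK Fq Δ))) := by
        rw [hB]
        exact Submodule.sub_mem _ (Submodule.neg_mem _ hmωa) hmz
      have hone : (1 : fieldK Fq Δ)
          = (AdjoinRoot.of _ u : ordO Fq Δ) • mapA Fq Δ a
            + (AdjoinRoot.of _ v : ordO Fq Δ) • mapA Fq Δ b
            + (AdjoinRoot.of _ w : ordO Fq Δ) • mapA Fq Δ c := by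
        simp only [Algebra.smul_def, algebraMap_of_eq]
        rw [← map_mul, ← map_mul, ← map_mul, ← map_add, ← map_add, hbezout, map_one]
      have hfin := Submodule.add_mem _
        (Submodule.add_mem _ (Submodule.smul_mem _ (AdjoinRoot.of _ u) hma)
          (Submodule.smul_mem _ (AdjoinRoot.of _ v) hmb))
        (Submodule.smul_mem _ (AdjoinRoot.of _ w) hmc)
      rwa [← hone] at hfin
end

section
/- Let a, b, c ∈ 𝔽_q[T] with gcd(a, b, c) = 1 and deg b < deg a ≤ deg c (so a ≠ 0), and set Δ := b² − 4ac. Assume deg Δ is odd or the leading coefficient of Δ is not a square in 𝔽_q. Let L be any field equipped with a nonarchimedean multiplicative absolute value |·| and a ring embedding ι : F_∞ → L satisfying |ι(f)| = |f| for all f ∈ F_∞, and suppose s ∈ L satisfies s² = ι(e(Δ)). Set z := (ι(e(−b)) + s) / ι(e(2a)). Then |z − ι(w)| ≥ |z| for every w ∈ F_∞ — so the imaginary part |z|_i := inf_{w ∈ F_∞} |z − ι(w)| equals |z| — and moreover 1 ≤ |z| ≤ q^{(deg Δ)/2}. -/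
/-!
For `w ∈ F_∞` we have `z - w = (u + s) / 2a` with `u = -b - 2a w ∈ F_∞`, so everything rests on
`|u + s| ≥ |s|` for all `u ∈ F_∞`. If `|u + s| < |s|`, then also `|u - s| ≤ |s|` (since `|2| ≤ 1`),
hence `|u² - Δ| = |u + s| |u - s| < |s|² = |Δ|`: so `u²` and `Δ` have the same order and leading
coefficient, which forces `deg Δ` to be even and its leading coefficient to be a square. The size
of `z` then comes from `|s| = q^{deg Δ / 2}`, `|b| < |s|` and `deg Δ = deg a + deg c ≥ 2 deg a`.
-/

open Polynomial

/-- The ring homomorphism `e : 𝔽_q[T] → F_∞ = 𝔽_q((X))` sending `T` to `X⁻¹`, realizing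
the completion of `𝔽_q(T)` at the place `1/T`. -/
noncomputable def polyToLaurent (Fq : Type) [Field Fq] :
    Polynomial Fq →+* LaurentSeries Fq :=
  Polynomial.eval₂RingHom (HahnSeries.C : Fq →+* LaurentSeries Fq)
    (HahnSeries.single (1 : ℤ) (1 : Fq))⁻¹

open Classical in
/-- The normalized absolute value on `F_∞ = 𝔽_q((X))`: `|f| := q^{−ord f}` for `f ≠ 0`,
and `|0| := 0`; in particular `|e a| = q^{deg a}` for nonzero `a ∈ 𝔽_q[T]`. -/
noncomputable def laurentAbs (Fq : Type) [Field Fq] [Fintype Fq] :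
    LaurentSeries Fq → ℝ :=
  fun f => if f = 0 then 0 else (Fintype.card Fq : ℝ) ^ (-f.order)

section PolyToLaurent

variable {K : Type} [Field K]

theorem polyToLaurent_eq_sum (p : K[X]) :
    polyToLaurent K p = p.sum fun n a => HahnSeries.single (-(n : ℤ)) a := by
  have hX : (HahnSeries.single (1 : ℤ) (1 : K))⁻¹ = HahnSeries.single (-1) 1 :=
    inv_eq_of_mul_eq_one_right (by simp [HahnSeries.single_mul_single])
  rw [polyToLaurent, coe_eval₂RingHom, eval₂_eq_sum, hX]
  refine Finset.sum_congr rfl fun n _ => ?_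
  simp [HahnSeries.single_pow, HahnSeries.C_apply, HahnSeries.single_mul_single]

theorem coeff_polyToLaurent (p : K[X]) (j : ℤ) :
    (polyToLaurent K p).coeff j = ∑ n ∈ p.support, if j = -(n : ℤ) then p.coeff n else 0 := by
  simp only [polyToLaurent_eq_sum, Polynomial.sum, HahnSeries.coeff_sum, HahnSeries.coeff_single]
  congr!

theorem coeff_polyToLaurent_neg_natCast (p : K[X]) (k : ℕ) :
    (polyToLaurent K p).coeff (-(k : ℤ)) = p.coeff k := by
  rw [coeff_polyToLaurent, Finset.sum_eq_single k (fun n _ hn => if_neg (by omega))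
    (fun hk => by simp [notMem_support_iff.mp hk]), if_pos rfl]

theorem coeff_polyToLaurent_of_lt {p : K[X]} {j : ℤ} (hj : j < -(p.natDegree : ℤ)) :
    (polyToLaurent K p).coeff j = 0 := by
  rw [coeff_polyToLaurent]
  refine Finset.sum_eq_zero fun n hn => if_neg ?_
  have := le_natDegree_of_mem_supp n hn
  omega

theorem order_polyToLaurent {p : K[X]} (hp : p ≠ 0) :
    (polyToLaurent K p).order = -(p.natDegree : ℤ) := by
  have hlead : (polyToLaurent K p).coeff (-(p.natDegree : ℤ)) ≠ 0 := by
    rw [coeff_polyToLaurent_neg_natCast]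
    exact leadingCoeff_ne_zero.mpr hp
  refine le_antisymm (HahnSeries.order_le_of_coeff_ne_zero hlead) ?_
  exact (HahnSeries.le_order_iff_forall (HahnSeries.ne_zero_of_coeff_ne_zero hlead)).mpr
    fun j hj => coeff_polyToLaurent_of_lt hj

theorem leadingCoeff_polyToLaurent {p : K[X]} (hp : p ≠ 0) :
    (polyToLaurent K p).leadingCoeff = p.leadingCoeff := by
  rw [HahnSeries.leadingCoeff_eq, order_polyToLaurent hp, coeff_polyToLaurent_neg_natCast]
  rfl

theorem polyToLaurent_ne_zero {p : K[X]} (hp : p ≠ 0) : polyToLaurent K p ≠ 0 := by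
  rw [← HahnSeries.leadingCoeff_ne_zero, leadingCoeff_polyToLaurent hp]
  exact leadingCoeff_ne_zero.mpr hp

theorem odd_order_or_not_isSquare_polyToLaurent {p : K[X]}
    (hp : Odd p.natDegree ∨ ¬∃ x : K, x ^ 2 = p.leadingCoeff) :
    Odd (polyToLaurent K p).order ∨ ¬IsSquare (polyToLaurent K p).leadingCoeff := by
  have hp0 : p ≠ 0 := by
    rintro rfl
    simp at hp
  rw [order_polyToLaurent hp0, leadingCoeff_polyToLaurent hp0, odd_neg, Int.odd_coe_nat]
  exact hp.imp id fun h ⟨r, hr⟩ => h ⟨r, by rw [hr, sq]⟩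

end PolyToLaurent

section LaurentAbs

variable {K : Type} [Field K] [Fintype K]

theorem laurentAbs_of_ne_zero {f : LaurentSeries K} (hf : f ≠ 0) :
    laurentAbs K f = (Fintype.card K : ℝ) ^ (-f.order) :=
  if_neg hf

theorem laurentAbs_nonneg (f : LaurentSeries K) : 0 ≤ laurentAbs K f := by
  unfold laurentAbs
  split_ifs <;> positivity

theorem laurentAbs_polyToLaurent {p : K[X]} (hp : p ≠ 0) :
    laurentAbs K (polyToLaurent K p) = (Fintype.card K : ℝ) ^ p.natDegree := by
  rw [laurentAbs_of_ne_zero (polyToLaurent_ne_zero hp), order_polyToLaurent hp, neg_neg,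
    zpow_natCast]

theorem laurentAbs_polyToLaurent_le (p : K[X]) :
    laurentAbs K (polyToLaurent K p) ≤ (Fintype.card K : ℝ) ^ p.natDegree := by
  rcases eq_or_ne p 0 with rfl | hp
  · simp [laurentAbs]
  · exact (laurentAbs_polyToLaurent hp).le

theorem orderTop_lt_orderTop_of_laurentAbs_lt {f g : LaurentSeries K}
    (h : laurentAbs K f < laurentAbs K g) : g.orderTop < f.orderTop := by
  have hg : g ≠ 0 := by
    rintro rfl
    exact (laurentAbs_nonneg f).not_gt (by simpa [laurentAbs] using h)
  rcases eq_or_ne f 0 with rfl | hf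
  · simpa using hg
  rw [laurentAbs_of_ne_zero hf, laurentAbs_of_ne_zero hg,
    zpow_lt_zpow_iff_right₀ (by exact_mod_cast Fintype.one_lt_card)] at h
  rw [← HahnSeries.order_eq_orderTop_of_ne_zero hf, ← HahnSeries.order_eq_orderTop_of_ne_zero hg]
  exact_mod_cast neg_lt_neg_iff.mp h

theorem order_eq_and_leadingCoeff_eq_of_laurentAbs_sub_lt {f g : LaurentSeries K}
    (h : laurentAbs K (f - g) < laurentAbs K g) :
    f.order = g.order ∧ f.leadingCoeff = g.leadingCoeff := by
  have hlt := orderTop_lt_orderTop_of_laurentAbs_lt h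
  have hf : f = g + (f - g) := by abel
  have hg : g ≠ 0 := HahnSeries.orderTop_ne_top.mp hlt.ne_top
  have hot : f.orderTop = g.orderTop := by rw [hf, HahnSeries.orderTop_add_eq_left hlt]
  have hf0 : f ≠ 0 := HahnSeries.orderTop_ne_top.mp (hot ▸ HahnSeries.orderTop_ne_top.mpr hg)
  refine ⟨WithTop.coe_inj.mp ?_, by rw [hf, HahnSeries.leadingCoeff_add_eq_left hlt]⟩
  rw [HahnSeries.order_eq_orderTop_of_ne_zero hf0, HahnSeries.order_eq_orderTop_of_ne_zero hg, hot]

theorem laurentAbs_le_laurentAbs_sq_sub {D : LaurentSeries K}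
    (hD : Odd D.order ∨ ¬IsSquare D.leadingCoeff) (u : LaurentSeries K) :
    laurentAbs K D ≤ laurentAbs K (u ^ 2 - D) := by
  by_contra! h
  obtain ⟨hord, hlead⟩ := order_eq_and_leadingCoeff_eq_of_laurentAbs_sub_lt h
  rw [HahnSeries.order_pow, sq, HahnSeries.leadingCoeff_mul] at *
  rcases hD with hodd | hns
  · exact Int.not_even_iff_odd.mpr hodd ⟨u.order, by rw [← hord, two_nsmul]⟩
  · exact hns ⟨u.leadingCoeff, hlead.symm⟩

end LaurentAbs

theorem IsNonarchimedean.apply_sq_sub_sq_lt {R : Type*} [CommRing R] [IsDomain R]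
    {v : AbsoluteValue R ℝ} (hna : IsNonarchimedean v) {x s : R} (h : v (x + s) < v s) :
    v (x ^ 2 - s ^ 2) < v s ^ 2 := by
  have hs : 0 < v s := (v.nonneg _).trans_lt h
  have h2 : v (-2 * s) ≤ v s := by
    rw [map_mul, v.map_neg]
    exact mul_le_of_le_one_left (v.nonneg s) (by exact_mod_cast hna.apply_natCast_le_one (n := 2))
  have hsub : v (x - s) ≤ v s :=
    calc v (x - s) = v ((x + s) + -2 * s) := by ring_nf
      _ ≤ max (v (x + s)) (v (-2 * s)) := hna _ _
      _ ≤ v s := max_le h.le h2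
  calc v (x ^ 2 - s ^ 2) = v (x + s) * v (x - s) := by rw [← map_mul]; ring_nf
    _ < v s * v s := mul_lt_mul_of_lt_of_le_of_nonneg_of_pos h hsub (v.nonneg _) hs
    _ = v s ^ 2 := (sq _).symm

theorem le_apply_add_of_sq_eq {K L : Type} [Field K] [Fintype K] [Field L]
    {v : AbsoluteValue L ℝ} (hna : IsNonarchimedean v) {ι : LaurentSeries K →+* L}
    (hι : ∀ f, v (ι f) = laurentAbs K f) {D : LaurentSeries K}
    (hD : Odd D.order ∨ ¬IsSquare D.leadingCoeff) {s : L} (hs : s ^ 2 = ι D)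
    (u : LaurentSeries K) : v s ≤ v (ι u + s) := by
  by_contra! h
  have hlt := hna.apply_sq_sub_sq_lt h
  rw [← map_pow v s, hs, ← map_pow, ← map_sub, hι, hι] at hlt
  exact (laurentAbs_le_laurentAbs_sq_sub hD u).not_gt hlt

theorem Polynomial.natDegree_sq_sub_four_mul_mul {R : Type*} [CommRing R] [IsDomain R]
    (h4 : (4 : R) ≠ 0) {a b c : R[X]} (hba : b.degree < a.degree) (hac : a.degree ≤ c.degree) :
    (b ^ 2 - 4 * a * c).natDegree = a.natDegree + c.natDegree := by
  have ha : a ≠ 0 := ne_zero_of_degree_gt hba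
  have hc : c ≠ 0 := ne_zero_of_degree_ge_degree hac ha
  have h4ac : 4 * a * c = C 4 * (a * c) := by rw [mul_assoc, map_ofNat]
  have hlt : (b ^ 2).degree < (4 * a * c).degree := by
    rw [h4ac, degree_C_mul h4, degree_mul]
    rcases eq_or_ne b 0 with rfl | hb
    · simpa [bot_lt_iff_ne_bot] using ⟨ha, hc⟩
    · rw [pow_two, degree_mul]
      exact WithBot.add_lt_add_of_lt_of_le (degree_ne_bot.mpr hb) hba (hba.le.trans hac)
  rw [natDegree_eq_of_degree_eq (degree_sub_eq_right_of_degree_lt hlt), h4ac, natDegree_C_mul h4,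
    natDegree_mul ha hc]

section Quotient

variable {F L : Type*} [CommRing F] [Field L] {v : AbsoluteValue L ℝ} {ι : F →+* L} {s : L}

theorem div_le_apply_div_sub (hs : ∀ u, v s ≤ v (ι u + s)) {α : F} (hα : ι α ≠ 0) (β w : F) :
    v s / v (ι α) ≤ v ((ι β + s) / ι α - ι w) := by
  have hsub : (ι β + s) / ι α - ι w = (ι (β - α * w) + s) / ι α := by
    rw [map_sub, map_mul]
    field_simp
    ring
  rw [hsub, map_div₀]
  exact div_le_div_of_nonneg_right (hs _) (v.nonneg _)

theorem apply_div_eq_div (hna : IsNonarchimedean v) (hs : ∀ u, v s ≤ v (ι u + s)) {β : F}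
    (hβ : v (ι β) ≤ v s) (α : F) : v ((ι β + s) / ι α) = v s / v (ι α) := by
  rw [map_div₀, le_antisymm ((hna _ _).trans (max_le hβ le_rfl)) (hs β)]

end Quotient

theorem FiniteField.two_ne_zero_of_odd_card {F : Type*} [Field F] [Fintype F]
    (hF : Odd (Fintype.card F)) : (2 : F) ≠ 0 :=
  Ring.two_ne_zero fun h => by
    have := FiniteField.even_card_iff_char_two.mp h
    rw [Nat.odd_iff] at hF
    omega

theorem apply_eq_rpow_of_sq_eq_polyToLaurent {K L : Type} [Field K] [Fintype K] [Field L]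
    {v : AbsoluteValue L ℝ} {ι : LaurentSeries K →+* L} (hι : ∀ f, v (ι f) = laurentAbs K f)
    {p : K[X]} (hp : p ≠ 0) {s : L} (hs : s ^ 2 = ι (polyToLaurent K p)) :
    v s = (Fintype.card K : ℝ) ^ ((p.natDegree : ℝ) / 2) := by
  refine (pow_left_inj₀ (v.nonneg s) (by positivity) two_ne_zero).mp ?_
  rw [← map_pow, hs, hι, laurentAbs_polyToLaurent hp, ← Real.rpow_natCast _ 2,
    ← Real.rpow_mul (by positivity), ← Real.rpow_natCast]
  norm_num

theorem stmt_9_general (Fq : Type) [Field Fq] [Fintype Fq]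
    (hq : Odd (Fintype.card Fq))
    (a b c Δ : Polynomial Fq)
    (hba : b.degree < a.degree) (hac : a.degree ≤ c.degree)
    (hΔ : Δ = b ^ 2 - 4 * a * c)
    (him : Odd Δ.natDegree ∨ ¬ ∃ x : Fq, x ^ 2 = Δ.leadingCoeff)
    (L : Type) [Field L] (v : AbsoluteValue L ℝ)
    (hna : ∀ x y : L, v (x + y) ≤ max (v x) (v y))
    (ι : LaurentSeries Fq →+* L)
    (hι : ∀ f : LaurentSeries Fq, v (ι f) = laurentAbs Fq f)
    (s : L) (hs : s ^ 2 = ι (polyToLaurent Fq Δ))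
    (z : L) (hz : z = (ι (polyToLaurent Fq (-b)) + s) / ι (polyToLaurent Fq (2 * a))) :
    (∀ w : LaurentSeries Fq, v z ≤ v (z - ι w)) ∧
    sInf (Set.range fun w : LaurentSeries Fq => v (z - ι w)) = v z ∧
    1 ≤ v z ∧ v z ≤ (Fintype.card Fq : ℝ) ^ ((Δ.natDegree : ℝ) / 2) := by
  set q : ℝ := (Fintype.card Fq : ℝ)
  have hq1 : 1 < q := Nat.one_lt_cast.mpr Fintype.one_lt_card
  have h2 := FiniteField.two_ne_zero_of_odd_card hq
  have ha : a ≠ 0 := ne_zero_of_degree_gt hba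
  have hD := odd_order_or_not_isSquare_polyToLaurent him
  have hkey := le_apply_add_of_sq_eq hna hι hD hs
  have hvs := apply_eq_rpow_of_sq_eq_polyToLaurent hι (by rintro rfl; simp at him) hs
  have hv2a : v (ι (polyToLaurent Fq (2 * a))) = q ^ a.natDegree := by
    rw [hι, show (2 : Fq[X]) * a = C 2 * a by rw [map_ofNat],
      laurentAbs_polyToLaurent (mul_ne_zero (C_ne_zero.mpr h2) ha), natDegree_C_mul h2]
  have hadeg : (a.natDegree : ℝ) ≤ (Δ.natDegree : ℝ) / 2 := by
    have h4 : (4 : Fq) ≠ 0 := by simpa [show (4 : Fq) = 2 * 2 by norm_num] using h2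
    have hac' := natDegree_le_natDegree hac
    rw [hΔ, natDegree_sq_sub_four_mul_mul h4 hba hac, le_div_iff₀ two_pos]
    exact_mod_cast (by omega : a.natDegree * 2 ≤ a.natDegree + c.natDegree)
  have hvb : v (ι (polyToLaurent Fq (-b))) ≤ v s := by
    rw [hι, hvs]
    refine (laurentAbs_polyToLaurent_le _).trans ?_
    rw [natDegree_neg, ← Real.rpow_natCast]
    refine Real.rpow_le_rpow_of_exponent_le hq1.le (le_trans ?_ hadeg)
    exact_mod_cast natDegree_le_natDegree hba.le
  have hvz : v z = v s / q ^ a.natDegree := by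
    rw [hz, apply_div_eq_div hna hkey hvb, hv2a]
  have himag : ∀ w, v z ≤ v (z - ι w) := fun w => by
    rw [hvz, ← hv2a, hz]
    exact div_le_apply_div_sub hkey (by rw [← v.pos_iff, hv2a]; positivity) _ w
  refine ⟨himag, IsLeast.csInf_eq ⟨⟨0, by simp⟩, by rintro _ ⟨w, rfl⟩; exact himag w⟩, ?_, ?_⟩
  · rw [hvz, hvs, one_le_div (by positivity), ← Real.rpow_natCast]
    exact Real.rpow_le_rpow_of_exponent_le hq1.le hadeg
  · rw [hvz, hvs]
    exact div_le_self (by positivity) (one_le_pow₀ hq1.le)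

/-- Let `a, b, c ∈ 𝔽_q[T]` with `gcd(a, b, c) = 1` and `deg b < deg a ≤ deg c` (so `a ≠ 0`),
and set `Δ := b² − 4ac`.  Assume `deg Δ` is odd or the leading coefficient of `Δ` is not a
square in `𝔽_q`.  Let `L` be any field equipped with a nonarchimedean multiplicative
absolute value `|·|` and a ring embedding `ι : F_∞ → L` satisfying `|ι f| = |f|`, and
suppose `s ∈ L` satisfies `s² = ι (e Δ)`.  Set `z := (ι (e (−b)) + s) / ι (e (2a))`.
Then `|z − ι w| ≥ |z|` for every `w ∈ F_∞` — so the imaginary part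
`|z|_i := inf_{w ∈ F_∞} |z − ι w|` equals `|z|` — and moreover `1 ≤ |z| ≤ q^{(deg Δ)/2}`. -/
theorem stmt_9 (Fq : Type) [Field Fq] [Fintype Fq]
    (hq : Odd (Fintype.card Fq))
    (a b c Δ : Polynomial Fq)
    (hgcd : ∀ d : Polynomial Fq, d ∣ a → d ∣ b → d ∣ c → IsUnit d)
    (hba : b.degree < a.degree) (hac : a.degree ≤ c.degree)
    (hΔ : Δ = b ^ 2 - 4 * a * c)
    (him : Odd Δ.natDegree ∨ ¬ ∃ x : Fq, x ^ 2 = Δ.leadingCoeff)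
    (L : Type) [Field L] (v : AbsoluteValue L ℝ)
    (hna : ∀ x y : L, v (x + y) ≤ max (v x) (v y))
    (ι : LaurentSeries Fq →+* L)
    (hι : ∀ f : LaurentSeries Fq, v (ι f) = laurentAbs Fq f)
    (s : L) (hs : s ^ 2 = ι (polyToLaurent Fq Δ))
    (z : L) (hz : z = (ι (polyToLaurent Fq (-b)) + s) / ι (polyToLaurent Fq (2 * a))) :
    (∀ w : LaurentSeries Fq, v z ≤ v (z - ι w)) ∧
    sInf (Set.range fun w : LaurentSeries Fq => v (z - ι w)) = v z ∧
    1 ≤ v z ∧ v z ≤ (Fintype.card Fq : ℝ) ^ ((Δ.natDegree : ℝ) / 2) :=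
  stmt_9_general Fq hq a b c Δ hba hac hΔ him L v hna ι hι s hs z hz
end
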